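/- Let $X$ be a smooth projective variety and $E$ a vector bundle on $X$. If $E$ is algebraically globally generated, then the relative hyperplane bundle $\mathcal{O}_{\mathbb{P}(E^{\vee})}(1)$ satisfies $\operatorname{PBs}|\mathcal{O}(1)| = \bigcap_{L \in \operatorname{Pic}^0(X)} \operatorname{Bs}|\mathcal{O}(1) \otimes p^*L| = \varnothing$, and conversely. -/
import Mathlib


open scoped TensorProduct

/-!
STATEMENT 13. Let `X` be a smooth projective variety and `E` a vector bundle on `X`, modelled
fiberwise: `E x` is the (finite-dimensional) fiber at a closed point `x`.  The algebraically
trivial line bundles `Pic⁰(X)` are indexed by `ι`, with `L i x` the one-dimensional fiber of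
the `i`-th one, and `Γ i ⊆ Π x, E x ⊗ L i x` is the space of global sections of `E ⊗ Lᵢ`
(a section recorded by its fiberwise values).

`E` is *algebraically globally generated* iff at every point `x` the values of sections of
the twists `E ⊗ Lᵢ`, divided by local trivializations `t ≠ 0` of `Lᵢ` at `x` (i.e. the
vectors `e ∈ E x` with `s x = e ⊗ t`), span `E x`.

On `p : ℙ(E^∨) → X` one has `p_* 𝒪(1) ≅ E`, and sections of `𝒪(1) ⊗ p^*Lᵢ` correspond to
sections of `E ⊗ Lᵢ`; such a section vanishes at the point `(x, [φ])` of `ℙ(E^∨)` (where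
`0 ≠ φ ∈ (E x)^∨`) iff `(φ ⊗ id)(s x) = 0`.  Thus
`PBs|𝒪(1)| = ⋂_{L ∈ Pic⁰(X)} Bs|𝒪(1) ⊗ p^*L| = ∅` iff for every `x` and every `φ ≠ 0` some
twisted section `s` has `(φ ⊗ id)(s x) ≠ 0`.

The theorem: `E` is algebraically globally generated ⟺ `PBs|𝒪(1)| = ∅`.
-/
theorem agg_iff_PBs_O1_empty
    {X ι : Type*} (E : X → Type*) (L : ι → X → Type*)
    [∀ x, AddCommGroup (E x)] [∀ x, Module ℂ (E x)] [∀ x, FiniteDimensional ℂ (E x)]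
    [∀ i x, AddCommGroup (L i x)] [∀ i x, Module ℂ (L i x)]
    (hL : ∀ i x, Module.finrank ℂ (L i x) = 1)
    (Γ : ∀ i, Submodule ℂ (Π x, E x ⊗[ℂ] L i x)) :
    (∀ x : X,
        Submodule.span ℂ
            {e : E x | ∃ i, ∃ s ∈ Γ i, ∃ t : L i x, t ≠ 0 ∧ s x = e ⊗ₜ[ℂ] t} = ⊤) ↔
      (∀ (x : X) (φ : Module.Dual ℂ (E x)), φ ≠ 0 →
        ∃ i, ∃ s ∈ Γ i, TensorProduct.map φ LinearMap.id (s x) ≠ 0) := by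
  -- every module `L i x` has a nonzero generator
  have hgen : ∀ i x, ∃ v : L i x, v ≠ 0 ∧ ∀ w : L i x, ∃ c : ℂ, c • v = w := by
    intro i x
    obtain ⟨v, hv, hw⟩ := finrank_eq_one_iff'.mp (hL i x)
    exact ⟨v, hv, hw⟩
  -- every element of `E x ⊗ L i x` is a pure tensor with the generator
  have hpure : ∀ i x (v : L i x), (∀ w : L i x, ∃ c : ℂ, c • v = w) →
      ∀ z : E x ⊗[ℂ] L i x, ∃ e : E x, z = e ⊗ₜ[ℂ] v := by
    intro i x v hv z
    induction z using TensorProduct.induction_on with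
    | zero => exact ⟨0, by simp⟩
    | tmul e t =>
        obtain ⟨c, hc⟩ := hv t
        exact ⟨c • e, by rw [← hc, TensorProduct.smul_tmul, TensorProduct.tmul_smul]⟩
    | add z₁ z₂ h₁ h₂ =>
        obtain ⟨e₁, rfl⟩ := h₁
        obtain ⟨e₂, rfl⟩ := h₂
        exact ⟨e₁ + e₂, by rw [TensorProduct.add_tmul]⟩
  -- a scalar tensor `c ⊗ₜ t` with `c ≠ 0`, `t ≠ 0` is nonzero
  have hscal : ∀ i x (c : ℂ) (t : L i x), c ≠ 0 → t ≠ 0 → (c ⊗ₜ[ℂ] t : ℂ ⊗[ℂ] L i x) ≠ 0 := by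
    intro i x c t hc ht h
    apply ht
    have := congrArg (TensorProduct.lid ℂ (L i x)) h
    simp only [TensorProduct.lid_tmul, map_zero] at this
    have := congrArg (fun y => c⁻¹ • y) this
    simpa [smul_smul, inv_mul_cancel₀ hc] using this
  constructor
  · intro h x φ hφ
    by_contra hc
    push_neg at hc
    apply hφ
    have hvanish : ∀ e ∈ {e : E x | ∃ i, ∃ s ∈ Γ i, ∃ t : L i x, t ≠ 0 ∧ s x = e ⊗ₜ[ℂ] t},
        φ e = 0 := by
      rintro e ⟨i, s, hs, t, ht, hst⟩
      by_contra he
      apply hscal i x (φ e) t he ht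
      have := hc i s hs
      rw [hst] at this
      simpa [TensorProduct.map_tmul] using this
    have : ∀ e : E x, φ e = 0 := by
      intro e
      have he : e ∈ Submodule.span ℂ
          {e : E x | ∃ i, ∃ s ∈ Γ i, ∃ t : L i x, t ≠ 0 ∧ s x = e ⊗ₜ[ℂ] t} := by
        rw [h x]; trivial
      refine Submodule.span_induction hvanish (by simp) ?_ ?_ he
      · intro a b _ _ ha hb; rw [map_add, ha, hb, add_zero]
      · intro c a _ ha; rw [map_smul, ha, smul_zero]
    exact LinearMap.ext this
  · intro h x
    by_contra hne
    obtain ⟨φ, hφ, hmap⟩ := Submodule.exists_dual_map_eq_bot_of_lt_top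
      (lt_top_iff_ne_top.mpr hne) inferInstance
    obtain ⟨i, s, hs, hnz⟩ := h x φ hφ
    obtain ⟨v, hv, hw⟩ := hgen i x
    obtain ⟨e, he⟩ := hpure i x v hw (s x)
    have heS : e ∈ Submodule.span ℂ
        {e : E x | ∃ i, ∃ s ∈ Γ i, ∃ t : L i x, t ≠ 0 ∧ s x = e ⊗ₜ[ℂ] t} :=
      Submodule.subset_span ⟨i, s, hs, v, hv, he⟩
    have hφe : φ e = 0 := by
      have : φ e ∈ Submodule.map φ (Submodule.span ℂ
          {e : E x | ∃ i, ∃ s ∈ Γ i, ∃ t : L i x, t ≠ 0 ∧ s x = e ⊗ₜ[ℂ] t}) :=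
        Submodule.mem_map_of_mem heS
      rw [hmap] at this
      simpa using this
    apply hnz
    rw [he]
    simp [TensorProduct.map_tmul, hφe]
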